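/- The operator −L is coercive on the mean-zero subspace: for every f ∈ L²(S¹) with ∫_{S¹} f dv = 0, one has ⟨−L f, f⟩_{L²(S¹)} ≥ 2λ ‖f‖²_{L²(S¹)}. -/

import Mathlib

open MeasureTheory Real

noncomputable section

/-- The unit circle, modelled as `ℝ / 2πℤ`, carrying the arclength measure
(total mass `2π`). -/
abbrev S1 : Type := AddCircle (2 * π)

instance : Fact ((0:ℝ) < 2 * π) := ⟨by positivity⟩

/-- The gain operator of the two-dimensional hard-disk linear Boltzmann equation:
`(K f)(v(θ)) = (1/2) ∫_{−1}^{1} f(v(θ + π − 2 arcsin δ)) dδ`. -/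
def Kop (f : S1 → ℂ) (θ : S1) : ℂ :=
  (1 / 2 : ℂ) * ∫ δ in (-1:ℝ)..1, f (θ + ((π - 2 * arcsin δ : ℝ) : S1))

/-!
The gain operator is diagonal in the Fourier basis: substituting `δ = sin u` turns `Kop e_n` into
`e_n` times `½ ∫_{-π/2}^{π/2} cos u · e^{in(π - 2u)} du = (1 - 4n²)⁻¹`. These eigenvalues are
negative for `n ≠ 0`, so `Re ⟨Kop f, f⟩ ≤ 0` whenever the zeroth Fourier coefficient of `f`
vanishes, and then `⟨−L f, f⟩ = 2λ (‖f‖² − Re ⟨Kop f, f⟩) ≥ 2λ ‖f‖²`.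
-/

open Set Submodule
open scoped InnerProductSpace Pointwise

section HilbertBasis

variable {ι 𝕜 E : Type*} [RCLike 𝕜] [NormedAddCommGroup E] [InnerProductSpace 𝕜 E]

theorem HilbertBasis.hasSum_inner_apply_of_apply_eq_smul (b : HilbertBasis ι 𝕜 E)
    {T : E →L[𝕜] E} {μ : ι → 𝕜} (hT : ∀ i, T (b i) = μ i • b i) (f : E) :
    HasSum (fun i => μ i * ((‖b.repr f i‖ ^ 2 : ℝ) : 𝕜)) ⟪f, T f⟫_𝕜 := by
  have hTf : HasSum (fun i => b.repr f i • μ i • b i) (T f) := by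
    simpa [hT] using (b.hasSum_repr f).mapL T
  convert hTf.mapL (innerSL 𝕜 f) using 1
  · ext i
    rw [innerSL_apply_apply, inner_smul_right, inner_smul_right, ← inner_conj_symm,
      ← b.repr_apply_apply, RCLike.ofReal_pow, ← RCLike.mul_conj]
    ring
  · rfl

theorem HilbertBasis.re_inner_apply_self_nonpos_of_apply_eq_smul (b : HilbertBasis ι 𝕜 E)
    {T : E →L[𝕜] E} {μ : ι → 𝕜} (hT : ∀ i, T (b i) = μ i • b i) {f : E} {i₀ : ι}
    (hf : b.repr f i₀ = 0) (hμ : ∀ i ≠ i₀, RCLike.re (μ i) ≤ 0) :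
    RCLike.re ⟪T f, f⟫_𝕜 ≤ 0 := by
  rw [← inner_re_symm]
  refine hasSum_le (fun i => ?_)
    (RCLike.hasSum_re _ (b.hasSum_inner_apply_of_apply_eq_smul hT f)) hasSum_zero
  rcases eq_or_ne i i₀ with rfl | hi
  · simp [hf]
  · simpa [RCLike.re_mul_ofReal] using
      mul_nonpos_of_nonpos_of_nonneg (hμ i hi) (sq_nonneg ‖b.repr f i‖)

end HilbertBasis

theorem MeasureTheory.quasiMeasurePreserving_fst_add_comp_snd {G β : Type*} [MeasurableSpace G]
    [AddGroup G] [MeasurableAdd₂ G] {μ : Measure G} [μ.IsAddRightInvariant] [SFinite μ]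
    [MeasurableSpace β] {ν : Measure β} [SFinite ν] {σ : β → G} (hσ : Measurable σ) :
    Measure.QuasiMeasurePreserving (fun p : G × β => p.1 + σ p.2) (μ.prod ν) μ := by
  have hshear : MeasurePreserving (fun q : β × G => (q.1, q.2 + σ q.1)) (ν.prod μ) (ν.prod μ) :=
    (MeasurePreserving.id ν).skew_product (g := fun b x => x + σ b)
      (measurable_snd.add (hσ.comp measurable_fst))
      (Filter.Eventually.of_forall fun b => map_add_right_eq_self μ (σ b))
  exact Measure.quasiMeasurePreserving_snd.comp
    (hshear.quasiMeasurePreserving.comp Measure.measurePreserving_swap.quasiMeasurePreserving)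

theorem intervalIntegral.integral_comp_arcsin {E : Type*} [NormedAddCommGroup E]
    [NormedSpace ℝ E] [CompleteSpace E] {g : ℝ → E} (hg : Continuous g) :
    ∫ δ in (-1 : ℝ)..1, g (arcsin δ) = ∫ u in -(π / 2)..π / 2, cos u • g u := by
  have hsubst := integral_deriv_smul_comp (fun u _ => hasDerivAt_sin u)
    continuous_cos.continuousOn (hg.comp continuous_arcsin) (a := -(π / 2)) (b := π / 2)
  simp only [Function.comp_apply, sin_neg, sin_pi_div_two] at hsubst
  rw [← hsubst]
  refine integral_congr fun u hu => ?_
  rw [Set.uIcc_of_le (by linarith [pi_pos])] at hu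
  rw [arcsin_sin hu.1 hu.2]

namespace AddCircle

variable {T : ℝ} [hT : Fact (0 < T)]

def volumeFourierLp (n : ℤ) : Lp ℂ 2 (volume : Measure (AddCircle T)) :=
  ContinuousMap.toLp 2 volume ℂ (((√T : ℂ))⁻¹ • fourier n)

theorem orthonormal_volumeFourierLp : Orthonormal ℂ (volumeFourierLp (T := T)) := by
  rw [orthonormal_iff_ite]
  intro i j
  rw [← orthonormal_iff_ite.mp (orthonormal_fourier (T := T)), volumeFourierLp, volumeFourierLp,
    fourierLp, fourierLp, ContinuousMap.inner_toLp, ContinuousMap.inner_toLp,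
    integral_haarAddCircle, ← integral_smul]
  congr! 2 with t
  have hsq : ((√T : ℂ)) ^ 2 = T := by exact_mod_cast Real.sq_sqrt hT.out.le
  simp only [ContinuousMap.smul_apply, smul_eq_mul, map_mul, map_inv₀, Complex.conj_ofReal,
    Complex.real_smul, Complex.ofReal_inv, ← hsq]
  ring

theorem span_volumeFourierLp_closure_eq_top :
    (span ℂ (range (volumeFourierLp (T := T)))).topologicalClosure = ⊤ := by
  have hc : IsUnit ((√T : ℂ))⁻¹ := by
    simpa using (Real.sqrt_pos.mpr hT.out).ne'
  have hrange : range (volumeFourierLp (T := T)) =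
      ((√T : ℂ))⁻¹ • range (ContinuousMap.toLp 2 volume ℂ ∘ fourier) := by
    rw [smul_set_range]
    exact congrArg range (funext fun n => map_smul _ _ _)
  convert! (ContinuousMap.toLp_denseRange ℂ (volume : Measure (AddCircle T)) ℂ
    (by norm_num : (2 : ENNReal) ≠ ⊤)).topologicalClosure_map_submodule
    (span_fourier_closure_eq_top (T := T))
  rw [hrange, span_smul_eq_of_isUnit _ _ hc, map_span, range_comp]
  rfl

def volumeFourierBasis : HilbertBasis ℤ ℂ (Lp ℂ 2 (volume : Measure (AddCircle T))) :=
  HilbertBasis.mk orthonormal_volumeFourierLp span_volumeFourierLp_closure_eq_top.ge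

theorem coe_volumeFourierBasis : ⇑(volumeFourierBasis (T := T)) = volumeFourierLp :=
  HilbertBasis.coe_mk _ _

theorem volumeFourierBasis_repr_zero (f : Lp ℂ 2 (volume : Measure (AddCircle T))) :
    volumeFourierBasis.repr f 0 = ((√T : ℂ))⁻¹ * ∫ t, f t := by
  rw [volumeFourierBasis.repr_apply_apply, coe_volumeFourierBasis, volumeFourierLp, L2.inner_def,
    ← integral_const_mul]
  refine integral_congr_ae ?_
  filter_upwards [ContinuousMap.coeFn_toLp (p := 2) (𝕜 := ℂ) (volume : Measure (AddCircle T))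
    (((√T : ℂ))⁻¹ • fourier 0)] with t ht
  rw [RCLike.inner_apply, ht]
  simp [mul_comm]

end AddCircle

def gainMultiplier (n : ℤ) : ℝ := (1 - 4 * n ^ 2)⁻¹

theorem gainMultiplier_nonpos {n : ℤ} (hn : n ≠ 0) : gainMultiplier n ≤ 0 := by
  have hsq : 0 < n ^ 2 := by positivity
  have : (1 - 4 * n ^ 2 : ℤ) < 0 := by omega
  exact inv_nonpos.mpr (by exact_mod_cast this.le)

theorem one_sub_four_mul_sq_mul_gainMultiplier (n : ℤ) :
    (1 - 4 * n ^ 2 : ℂ) * gainMultiplier n = 1 := by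
  have : (1 - 4 * n ^ 2 : ℤ) ≠ 0 := by omega
  rw [gainMultiplier]
  push_cast
  exact mul_inv_cancel₀ (by exact_mod_cast this)

-- The ansatz `cexp (n * (π - 2 * u) * I) * (a * sin u + b * cos u)` forces `b = -2 * n * I * a`
-- and `(1 - 4 * n ^ 2) * a = 1`.
open Complex in
theorem hasDerivAt_antideriv_cos_smul_cexp (n : ℤ) (u : ℝ) :
    HasDerivAt (fun u : ℝ => gainMultiplier n * cexp (n * (π - 2 * u) * I) *
        (Real.sin u - 2 * n * I * Real.cos u)) (Real.cos u • cexp (n * (π - 2 * u) * I)) u := by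
  have hphase : HasDerivAt (fun u : ℝ => (n * (π - 2 * u) * I : ℂ)) (-2 * n * I) u := by
    refine (((((hasDerivAt_id u).ofReal_comp.const_mul 2).const_sub (π : ℂ)).const_mul
      (n : ℂ)).mul_const I).congr_deriv ?_
    simp only [ofReal_one]
    ring
  have hsin : HasDerivAt (fun u : ℝ => (Real.sin u : ℂ)) (Real.cos u) u :=
    (Real.hasDerivAt_sin u).ofReal_comp
  have hcos : HasDerivAt (fun u : ℝ => (Real.cos u : ℂ)) (-Real.sin u) u := by
    simpa using (Real.hasDerivAt_cos u).ofReal_comp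
  refine ((hphase.cexp.const_mul (gainMultiplier n : ℂ)).mul
    (hsin.sub (hcos.const_mul (2 * n * I)))).congr_deriv ?_
  rw [real_smul, Pi.sub_apply]
  linear_combination
    (Real.cos u * cexp (n * (π - 2 * u) * I)) * one_sub_four_mul_sq_mul_gainMultiplier n +
    (4 * n ^ 2 * gainMultiplier n * Real.cos u * cexp (n * (π - 2 * u) * I)) * I_sq

open Complex in
theorem integral_cos_smul_cexp (n : ℤ) :
    ∫ u in -(π / 2)..π / 2, Real.cos u • cexp (n * (π - 2 * u) * I) = 2 * gainMultiplier n := by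
  rw [intervalIntegral.integral_eq_sub_of_hasDerivAt
    (fun u _ => hasDerivAt_antideriv_cos_smul_cexp n u)
    (by apply Continuous.intervalIntegrable; fun_prop)]
  have hright : (n * (π - 2 * ((π / 2 : ℝ) : ℂ)) * I) = 0 := by push_cast; ring
  have hleft : (n * (π - 2 * ((-(π / 2) : ℝ) : ℂ)) * I) = n * (2 * π * I) := by push_cast; ring
  simp only [hright, hleft, Complex.exp_zero, exp_int_mul_two_pi_mul_I, Real.sin_pi_div_two,
    Real.cos_pi_div_two, Real.sin_neg, Real.cos_neg]
  push_cast
  ring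

theorem fourier_add_coe (n : ℤ) (θ : S1) (x : ℝ) :
    fourier n (θ + (x : S1)) = fourier n θ * Complex.exp (n * x * Complex.I) := by
  have hchar : fourier n (θ + (x : S1)) = fourier n θ * fourier n (x : S1) := by
    simp only [fourier_apply, smul_add, AddCircle.toCircle_add, Circle.coe_mul]
  rw [hchar, fourier_coe_apply]
  congr 2
  push_cast
  field_simp

theorem Kop_fourier (n : ℤ) : Kop (fourier n) = (gainMultiplier n : ℂ) • ⇑(fourier n) := by
  ext θ
  simp only [Kop, fourier_add_coe, intervalIntegral.integral_const_mul]
  push_cast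
  rw [intervalIntegral.integral_comp_arcsin
    (g := fun u : ℝ => Complex.exp (n * (π - 2 * u) * Complex.I)) (by fun_prop),
    integral_cos_smul_cexp]
  simp only [Pi.smul_apply, smul_eq_mul]
  ring

theorem Kop_congr_ae {g h : S1 → ℂ} (hgh : g =ᵐ[volume] h) : Kop g =ᵐ[volume] Kop h := by
  have hshift : Measure.QuasiMeasurePreserving
      (fun p : S1 × ℝ => p.1 + ((π - 2 * arcsin p.2 : ℝ) : S1)) (volume.prod volume) volume :=
    quasiMeasurePreserving_fst_add_comp_snd
      (σ := fun δ : ℝ => ((π - 2 * arcsin δ : ℝ) : S1)) (by fun_prop)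
  filter_upwards [Measure.ae_ae_of_ae_prod (hshift.ae_eq hgh)] with θ hθ
  unfold Kop
  congr 1
  exact intervalIntegral.integral_congr_ae (hθ.mono fun _ hδ _ => hδ)

theorem Kop_smul (c : ℂ) (g : S1 → ℂ) : Kop (c • g) = c • Kop g := by
  ext θ
  simp only [Kop, Pi.smul_apply, smul_eq_mul, intervalIntegral.integral_const_mul]
  ring

theorem apply_volumeFourierBasis_of_ae_eq_Kop
    {T : Lp ℂ 2 (volume : Measure S1) →L[ℂ] Lp ℂ 2 (volume : Measure S1)}
    (hT : ∀ f : Lp ℂ 2 (volume : Measure S1), (T f : S1 → ℂ) =ᵐ[volume] Kop f) (n : ℤ) :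
    T (AddCircle.volumeFourierBasis n) =
      (gainMultiplier n : ℂ) • AddCircle.volumeFourierBasis n := by
  set c : ℂ := ((√(2 * π) : ℝ) : ℂ)⁻¹
  have hcoe : ⇑(AddCircle.volumeFourierLp n : Lp ℂ 2 (volume : Measure S1)) =ᵐ[volume]
      ⇑(c • fourier n) :=
    ContinuousMap.coeFn_toLp (p := 2) (𝕜 := ℂ) volume _
  rw [AddCircle.coe_volumeFourierBasis]
  apply Lp.ext
  calc ⇑(T (AddCircle.volumeFourierLp n)) =ᵐ[volume] Kop (AddCircle.volumeFourierLp n) := hT _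
    _ =ᵐ[volume] Kop ⇑(c • fourier n) := Kop_congr_ae hcoe
    _ = (gainMultiplier n : ℂ) • ⇑(c • fourier n) := by
      rw [ContinuousMap.coe_smul, Kop_smul, Kop_fourier, smul_comm]
    _ =ᵐ[volume] ⇑((gainMultiplier n : ℂ) • AddCircle.volumeFourierLp n) :=
      ((Lp.coeFn_smul _ _).trans (hcoe.fun_comp ((gainMultiplier n : ℂ) • ·))).symm

/-- `−L` is coercive on the mean-zero subspace: for every
`f ∈ L²(S¹)` with `∫ f dv = 0`, one has `⟨−L f, f⟩ ≥ 2λ ‖f‖²`. -/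
theorem neg_L_coercive_on_mean_zero
    (lam : ℝ) (hlam : 0 < lam)
    (T : Lp ℂ 2 (volume : Measure S1) →L[ℂ] Lp ℂ 2 (volume : Measure S1))
    (hT : ∀ f : Lp ℂ 2 (volume : Measure S1), (T f : S1 → ℂ) =ᵐ[volume] Kop f) :
    ∀ f : Lp ℂ 2 (volume : Measure S1),
      (∫ v, f v ∂(volume : Measure S1)) = 0 →
      2 * lam * ‖f‖ ^ 2 ≤
        (inner ℂ (-((((2 * lam : ℝ) : ℂ) •
          (T - ContinuousLinearMap.id ℂ (Lp ℂ 2 (volume : Measure S1)))) f)) f : ℂ).re := by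
  intro f hf
  have hmean : AddCircle.volumeFourierBasis.repr f 0 = 0 := by
    rw [AddCircle.volumeFourierBasis_repr_zero, hf, mul_zero]
  have hK : (inner ℂ (T f) f).re ≤ 0 :=
    AddCircle.volumeFourierBasis.re_inner_apply_self_nonpos_of_apply_eq_smul
      (apply_volumeFourierBasis_of_ae_eq_Kop hT) hmean
      fun n hn => by simpa using gainMultiplier_nonpos hn
  have hnorm : (⟪f, f⟫_ℂ).re = ‖f‖ ^ 2 := inner_self_eq_norm_sq (𝕜 := ℂ) f
  simp only [smul_apply, sub_apply, ContinuousLinearMap.id_apply, inner_neg_left, inner_smul_left,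
    inner_sub_left, Complex.conj_ofReal, Complex.neg_re, Complex.re_ofReal_mul, Complex.sub_re,
    hnorm]
  linarith [mul_nonpos_of_nonneg_of_nonpos hlam.le hK]
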